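/- Let W and Y_1, …, Y_n be random variables on a common finite probability space taking values in finite sets, and suppose Y_1, …, Y_n are mutually conditionally independent given W. For S ⊆ {1, …, n}, write Y_S for the joint random variable (Y_i)_{i ∈ S}. Then the set function f(S) := I(Y_S; W) = H(Y_S) − Σ_{i ∈ S} H(Y_i | W) is submodular: for all S ⊆ T ⊆ {1, …, n} and i ∉ T, f(S ∪ {i}) − f(S) ≥ f(T ∪ {i}) − f(T) (with f(∅) := 0). -/

import Mathlib

open scoped BigOperators

noncomputable section

/-- The probability mass that `p` assigns to the event `X = a`,
for a random variable `X` on a finite probability space. -/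
def distOf {Ω : Type*} [Fintype Ω] (p : Ω → ℝ) {α : Type*} [Fintype α] [DecidableEq α]
    (X : Ω → α) (a : α) : ℝ :=
  ∑ ω, if X ω = a then p ω else 0

/-- Shannon entropy `H(X)` of a random variable `X` under `p`. -/
def entropy {Ω : Type*} [Fintype Ω] (p : Ω → ℝ) {α : Type*} [Fintype α] [DecidableEq α]
    (X : Ω → α) : ℝ :=
  ∑ a, Real.negMulLog (distOf p X a)

/-- Conditional Shannon entropy `H(X | Y) = H(X, Y) - H(Y)`. -/
def condEntropy {Ω : Type*} [Fintype Ω] (p : Ω → ℝ) {α β : Type*}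
    [Fintype α] [DecidableEq α] [Fintype β] [DecidableEq β]
    (X : Ω → α) (Y : Ω → β) : ℝ :=
  entropy p (fun ω => (X ω, Y ω)) - entropy p Y

/-- Mutual information `I(X;Y) = H(X) + H(Y) - H(X, Y)`. -/
def mutualInfo {Ω : Type*} [Fintype Ω] (p : Ω → ℝ) {α β : Type*}
    [Fintype α] [DecidableEq α] [Fintype β] [DecidableEq β]
    (X : Ω → α) (Y : Ω → β) : ℝ :=
  entropy p X + entropy p Y - entropy p (fun ω => (X ω, Y ω))

/-- Conditional mutual information `I(X;Y|Z) = H(X,Z) + H(Y,Z) - H(X,Y,Z) - H(Z)`. -/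
def condMutualInfo {Ω : Type*} [Fintype Ω] (p : Ω → ℝ) {α β γ : Type*}
    [Fintype α] [DecidableEq α] [Fintype β] [DecidableEq β] [Fintype γ] [DecidableEq γ]
    (X : Ω → α) (Y : Ω → β) (Z : Ω → γ) : ℝ :=
  entropy p (fun ω => (X ω, Z ω)) + entropy p (fun ω => (Y ω, Z ω))
    - entropy p (fun ω => (X ω, Y ω, Z ω)) - entropy p Z

/-- `X` and `Y` are conditionally independent given `Z` under `p`:
`P(X = a, Y = b, Z = c) * P(Z = c) = P(X = a, Z = c) * P(Y = b, Z = c)` for all `a, b, c`. -/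
def CondIndepFun {Ω : Type*} [Fintype Ω] (p : Ω → ℝ) {α β γ : Type*}
    [Fintype α] [DecidableEq α] [Fintype β] [DecidableEq β] [Fintype γ] [DecidableEq γ]
    (X : Ω → α) (Y : Ω → β) (Z : Ω → γ) : Prop :=
  ∀ a b c, distOf p (fun ω => (X ω, Y ω, Z ω)) (a, b, c) * distOf p Z c
    = distOf p (fun ω => (X ω, Z ω)) (a, c) * distOf p (fun ω => (Y ω, Z ω)) (b, c)

/-- `X` and `Y` are (unconditionally) independent under `p`. -/
def IndepFun' {Ω : Type*} [Fintype Ω] (p : Ω → ℝ) {α β : Type*}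
    [Fintype α] [DecidableEq α] [Fintype β] [DecidableEq β]
    (X : Ω → α) (Y : Ω → β) : Prop :=
  ∀ a b, distOf p (fun ω => (X ω, Y ω)) (a, b) = distOf p X a * distOf p Y b

end

section aux
variable {Ω : Type*} [Fintype Ω] {p : Ω → ℝ}
variable {α β γ : Type*} [Fintype α] [DecidableEq α] [Fintype β] [DecidableEq β]
  [Fintype γ] [DecidableEq γ]

lemma distOf_nonneg (hp : ∀ ω, 0 ≤ p ω) (X : Ω → α) (a : α) : 0 ≤ distOf p X a :=
  Finset.sum_nonneg fun ω _ => by split <;> simp [hp ω]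

lemma sum_distOf (X : Ω → α) : ∑ a, distOf p X a = ∑ ω, p ω := by
  unfold distOf
  rw [Finset.sum_comm]
  refine Finset.sum_congr rfl fun ω _ => ?_
  simp [Finset.sum_ite_eq]

lemma distOf_fst_marg (X : Ω → α) (Z : Ω → γ) (c : γ) :
    ∑ a, distOf p (fun ω => (X ω, Z ω)) (a, c) = distOf p Z c := by
  unfold distOf
  rw [Finset.sum_comm]
  refine Finset.sum_congr rfl fun ω _ => ?_
  by_cases h : Z ω = c
  · simp [Prod.ext_iff, h, Finset.sum_ite_eq]
  · simp [Prod.ext_iff, h]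

lemma distOf_mid_marg (X : Ω → α) (Y : Ω → β) (Z : Ω → γ) (a : α) (c : γ) :
    ∑ b, distOf p (fun ω => (X ω, Y ω, Z ω)) (a, b, c)
      = distOf p (fun ω => (X ω, Z ω)) (a, c) := by
  unfold distOf
  rw [Finset.sum_comm]
  refine Finset.sum_congr rfl fun ω _ => ?_
  by_cases h : X ω = a ∧ Z ω = c
  · simp [Prod.ext_iff, h.1, h.2, Finset.sum_ite_eq]
  · rw [if_neg (by simp [Prod.ext_iff]; tauto)]
    refine Finset.sum_eq_zero fun b _ => if_neg (by simp [Prod.ext_iff]; tauto)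

lemma distOf_first_marg (X : Ω → α) (Y : Ω → β) (Z : Ω → γ) (b : β) (c : γ) :
    ∑ a, distOf p (fun ω => (X ω, Y ω, Z ω)) (a, b, c)
      = distOf p (fun ω => (Y ω, Z ω)) (b, c) := by
  unfold distOf
  rw [Finset.sum_comm]
  refine Finset.sum_congr rfl fun ω _ => ?_
  by_cases h : Y ω = b ∧ Z ω = c
  · simp [Prod.ext_iff, h.1, h.2, Finset.sum_ite_eq]
  · rw [if_neg (by simp [Prod.ext_iff]; tauto)]
    refine Finset.sum_eq_zero fun a _ => if_neg (by simp [Prod.ext_iff]; tauto)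

lemma distOf_pair_le (hp : ∀ ω, 0 ≤ p ω) (X : Ω → α) (Z : Ω → γ) (a : α) (c : γ) :
    distOf p (fun ω => (X ω, Z ω)) (a, c) ≤ distOf p Z c := by
  refine Finset.sum_le_sum fun ω _ => ?_
  dsimp only
  by_cases h : X ω = a ∧ Z ω = c
  · simp [Prod.ext_iff, h.1, h.2]
  · rw [if_neg (by simp [Prod.ext_iff]; tauto)]
    split <;> simp [hp ω]

/-- entropy is invariant under injective recoding -/
lemma distOf_comp_inj (X : Ω → α) (g : α → β) (hg : Function.Injective g) (a : α) :
    distOf p (fun ω => g (X ω)) (g a) = distOf p X a := by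
  unfold distOf
  exact Finset.sum_congr rfl fun ω _ => by simp [hg.eq_iff]

lemma entropy_comp_inj' (X : Ω → α) (X' : Ω → β) (g : α → β) (hg : Function.Injective g)
    (hX : ∀ ω, X' ω = g (X ω)) : entropy p X' = entropy p X := by
  have hXX : X' = fun ω => g (X ω) := funext hX
  subst hXX
  unfold entropy
  have h1 : ∑ b : β, Real.negMulLog (distOf p (fun ω => g (X ω)) b)
      = ∑ b ∈ Finset.univ.image g, Real.negMulLog (distOf p (fun ω => g (X ω)) b) := by
    refine (Finset.sum_subset (Finset.subset_univ _) ?_).symm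
    intro b _ hb
    have : distOf p (fun ω => g (X ω)) b = 0 := by
      refine Finset.sum_eq_zero fun ω _ => if_neg fun h => ?_
      exact hb (Finset.mem_image.mpr ⟨X ω, Finset.mem_univ _, h⟩)
    simp [this]
  rw [h1, Finset.sum_image (fun x _ y _ h => hg h)]
  exact Finset.sum_congr rfl fun a _ => by rw [distOf_comp_inj X g hg]

end aux

section cmi
variable {Ω : Type*} [Fintype Ω] {p : Ω → ℝ}
variable {α β γ : Type*} [Fintype α] [DecidableEq α] [Fintype β] [DecidableEq β]
  [Fintype γ] [DecidableEq γ]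

lemma sum_rot3 (f : α → β → γ → ℝ) :
    ∑ a, ∑ b, ∑ c, f a b c = ∑ c, ∑ a, ∑ b, f a b c :=
  calc ∑ a, ∑ b, ∑ c, f a b c
      = ∑ a, ∑ c, ∑ b, f a b c :=
        Finset.sum_congr rfl fun a _ => Finset.sum_comm
    _ = ∑ c, ∑ a, ∑ b, f a b c := Finset.sum_comm

lemma condMutualInfo_eq (X : Ω → α) (Y : Ω → β) (Z : Ω → γ) :
    condMutualInfo p X Y Z = ∑ a, ∑ b, ∑ c,
      (distOf p (fun ω => (X ω, Y ω, Z ω)) (a, b, c)) *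
        (Real.log (distOf p (fun ω => (X ω, Y ω, Z ω)) (a, b, c))
          + Real.log (distOf p Z c)
          - Real.log (distOf p (fun ω => (X ω, Z ω)) (a, c))
          - Real.log (distOf p (fun ω => (Y ω, Z ω)) (b, c))) := by
  set q : α → β → γ → ℝ := fun a b c => distOf p (fun ω => (X ω, Y ω, Z ω)) (a, b, c) with hq
  set s : α → γ → ℝ := fun a c => distOf p (fun ω => (X ω, Z ω)) (a, c) with hs
  set t : β → γ → ℝ := fun b c => distOf p (fun ω => (Y ω, Z ω)) (b, c) with ht
  set r : γ → ℝ := fun c => distOf p Z c with hr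
  have hXZ : entropy p (fun ω => (X ω, Z ω))
      = ∑ a, ∑ b, ∑ c, -(q a b c * Real.log (s a c)) := by
    unfold entropy
    rw [Fintype.sum_prod_type]
    refine Finset.sum_congr rfl fun a _ => ?_
    conv_rhs => rw [Finset.sum_comm]
    refine Finset.sum_congr rfl fun c _ => ?_
    rw [Real.negMulLog]
    have hm : s a c = ∑ b, q a b c := (distOf_mid_marg X Y Z a c).symm
    rw [show -(s a c) * Real.log (s a c) = -((∑ b, q a b c) * Real.log (s a c)) by
      rw [← hm]; ring]
    rw [Finset.sum_mul, ← Finset.sum_neg_distrib]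
  have hYZ : entropy p (fun ω => (Y ω, Z ω))
      = ∑ a, ∑ b, ∑ c, -(q a b c * Real.log (t b c)) := by
    unfold entropy
    rw [Fintype.sum_prod_type]
    conv_rhs => rw [Finset.sum_comm]
    refine Finset.sum_congr rfl fun b _ => ?_
    conv_rhs => rw [Finset.sum_comm]
    refine Finset.sum_congr rfl fun c _ => ?_
    rw [Real.negMulLog]
    have hm : t b c = ∑ a, q a b c := (distOf_first_marg X Y Z b c).symm
    rw [show -(t b c) * Real.log (t b c) = -((∑ a, q a b c) * Real.log (t b c)) by
      rw [← hm]; ring]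
    rw [Finset.sum_mul, ← Finset.sum_neg_distrib]
  have hZ : entropy p Z = ∑ a, ∑ b, ∑ c, -(q a b c * Real.log (r c)) := by
    unfold entropy
    rw [sum_rot3]
    refine Finset.sum_congr rfl fun c _ => ?_
    rw [Real.negMulLog]
    have hm1 : r c = ∑ a, s a c := (distOf_fst_marg X Z c).symm
    rw [show -(r c) * Real.log (r c) = ∑ a, -(s a c * Real.log (r c)) by
      rw [Finset.sum_neg_distrib, ← Finset.sum_mul, ← hm1]; ring]
    refine Finset.sum_congr rfl fun a _ => ?_
    have hm2 : s a c = ∑ b, q a b c := (distOf_mid_marg X Y Z a c).symm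
    rw [hm2, Finset.sum_mul, ← Finset.sum_neg_distrib]
  have hXYZ : entropy p (fun ω => (X ω, Y ω, Z ω))
      = ∑ a, ∑ b, ∑ c, -(q a b c * Real.log (q a b c)) := by
    unfold entropy
    rw [Fintype.sum_prod_type]
    refine Finset.sum_congr rfl fun a _ => ?_
    rw [Fintype.sum_prod_type]
    refine Finset.sum_congr rfl fun b _ => ?_
    refine Finset.sum_congr rfl fun c _ => ?_
    rw [Real.negMulLog]
    ring
  rw [condMutualInfo, hXZ, hYZ, hZ, hXYZ]
  simp only [← Finset.sum_add_distrib, ← Finset.sum_sub_distrib]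
  refine Finset.sum_congr rfl fun a _ => Finset.sum_congr rfl fun b _ =>
    Finset.sum_congr rfl fun c _ => by ring

lemma condMutualInfo_nonneg (hp : ∀ ω, 0 ≤ p ω) (hsum : ∑ ω, p ω = 1)
    (X : Ω → α) (Y : Ω → β) (Z : Ω → γ) :
    0 ≤ condMutualInfo p X Y Z := by
  rw [condMutualInfo_eq X Y Z]
  set q : α → β → γ → ℝ := fun a b c => distOf p (fun ω => (X ω, Y ω, Z ω)) (a, b, c) with hq
  set s : α → γ → ℝ := fun a c => distOf p (fun ω => (X ω, Z ω)) (a, c) with hs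
  set t : β → γ → ℝ := fun b c => distOf p (fun ω => (Y ω, Z ω)) (b, c) with ht
  set r : γ → ℝ := fun c => distOf p Z c with hr
  have hqn : ∀ a b c, 0 ≤ q a b c := fun a b c => distOf_nonneg hp _ _
  have hsn : ∀ a c, 0 ≤ s a c := fun a c => distOf_nonneg hp _ _
  have htn : ∀ b c, 0 ≤ t b c := fun b c => distOf_nonneg hp _ _
  have hrn : ∀ c, 0 ≤ r c := fun c => distOf_nonneg hp _ _
  have hqs : ∀ a b c, q a b c ≤ s a c := by
    intro a b c
    rw [hs]
    dsimp only
    rw [← distOf_mid_marg X Y Z a c]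
    exact Finset.single_le_sum (fun b _ => hqn a b c) (Finset.mem_univ b)
  have hqt : ∀ a b c, q a b c ≤ t b c := by
    intro a b c
    rw [ht]
    dsimp only
    rw [← distOf_first_marg X Y Z b c]
    exact Finset.single_le_sum (fun a _ => hqn a b c) (Finset.mem_univ a)
  have hsr : ∀ a c, s a c ≤ r c := fun a c => distOf_pair_le hp X Z a c
  have key : ∀ a b c, q a b c - s a c * t b c / r c
      ≤ q a b c * (Real.log (q a b c) + Real.log (r c)
          - Real.log (s a c) - Real.log (t b c)) := by
    intro a b c
    rcases eq_or_lt_of_le (hqn a b c) with h0 | h0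
    · rw [← h0]
      have : 0 ≤ s a c * t b c / r c :=
        div_nonneg (mul_nonneg (hsn a c) (htn b c)) (hrn c)
      simp only [zero_mul]
      linarith
    · have hspos : 0 < s a c := lt_of_lt_of_le h0 (hqs a b c)
      have htpos : 0 < t b c := lt_of_lt_of_le h0 (hqt a b c)
      have hrpos : 0 < r c := lt_of_lt_of_le hspos (hsr a c)
      set m := s a c * t b c / r c with hm
      have hmpos : 0 < m := div_pos (mul_pos hspos htpos) hrpos
      have hlog : Real.log (q a b c) + Real.log (r c)
          - Real.log (s a c) - Real.log (t b c)
          = Real.log (q a b c) - Real.log m := by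
        rw [hm, Real.log_div (by positivity) (by positivity),
          Real.log_mul (by positivity) (by positivity)]
        ring
      rw [hlog]
      have h1 : Real.log (m / q a b c) ≤ m / q a b c - 1 :=
        Real.log_le_sub_one_of_pos (by positivity)
      rw [Real.log_div (by positivity) (by positivity)] at h1
      have h2 := mul_le_mul_of_nonneg_left h1 (le_of_lt h0)
      have h3 : q a b c * (m / q a b c - 1) = m - q a b c := by field_simp
      nlinarith [h2, h3]
  have hlb : ∑ a, ∑ b, ∑ c, (q a b c - s a c * t b c / r c)
      ≤ ∑ a, ∑ b, ∑ c, q a b c * (Real.log (q a b c) + Real.log (r c)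
          - Real.log (s a c) - Real.log (t b c)) := by
    refine Finset.sum_le_sum fun a _ => Finset.sum_le_sum fun b _ =>
      Finset.sum_le_sum fun c _ => key a b c
  refine le_trans ?_ hlb
  have h1 : ∑ a, ∑ b, ∑ c, q a b c = 1 := by
    have h := sum_distOf (p := p) (fun ω => (X ω, Y ω, Z ω))
    rw [hsum] at h
    rw [← h]
    simp only [Fintype.sum_prod_type]; rfl
  have hst : ∀ c, ∑ a, ∑ b, s a c * t b c / r c ≤ r c := by
    intro c
    have heq : ∑ a, ∑ b, s a c * t b c / r c = (∑ a, s a c) * (∑ b, t b c) / r c := by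
      rw [Finset.sum_mul_sum, Finset.sum_div]
      exact Finset.sum_congr rfl fun a _ => by rw [Finset.sum_div]
    have hsa : ∑ a, s a c = r c := distOf_fst_marg X Z c
    have htb : ∑ b, t b c = r c := distOf_fst_marg Y Z c
    rw [heq, hsa, htb]
    rcases eq_or_lt_of_le (hrn c) with h | h
    · rw [← h]; simp
    · rw [mul_div_assoc, div_self (ne_of_gt h), mul_one]
  have h2 : ∑ a, ∑ b, ∑ c, s a c * t b c / r c ≤ 1 := by
    rw [sum_rot3]
    have hrsum : ∑ c, r c = 1 := by rw [hr]; rw [sum_distOf Z, hsum]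
    calc ∑ c, ∑ a, ∑ b, s a c * t b c / r c ≤ ∑ c, r c :=
          Finset.sum_le_sum fun c _ => hst c
      _ = 1 := hrsum
  simp only [Finset.sum_sub_distrib]
  linarith

lemma condMutualInfo_eq_zero (hp : ∀ ω, 0 ≤ p ω)
    (X : Ω → α) (Y : Ω → β) (Z : Ω → γ) (h : CondIndepFun p X Y Z) :
    condMutualInfo p X Y Z = 0 := by
  rw [condMutualInfo_eq X Y Z]
  refine Finset.sum_eq_zero fun a _ => ?_
  refine Finset.sum_eq_zero fun b _ => ?_
  refine Finset.sum_eq_zero fun c _ => ?_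
  set q := distOf p (fun ω => (X ω, Y ω, Z ω)) (a, b, c) with hq
  set s := distOf p (fun ω => (X ω, Z ω)) (a, c) with hs
  set t := distOf p (fun ω => (Y ω, Z ω)) (b, c) with ht
  set r := distOf p Z c with hr
  rcases eq_or_lt_of_le (distOf_nonneg hp (fun ω => (X ω, Y ω, Z ω)) (a, b, c)) with h0 | h0
  · rw [hq, ← h0, zero_mul]
  · have hqs : q ≤ s := by
      rw [hq, hs, ← distOf_mid_marg X Y Z a c]
      exact Finset.single_le_sum
        (f := fun b' => distOf p (fun ω => (X ω, Y ω, Z ω)) (a, b', c))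
        (fun b' _ => distOf_nonneg hp _ _) (Finset.mem_univ b)
    have hsr : s ≤ r := distOf_pair_le hp X Z a c
    have hrpos : 0 < r := lt_of_lt_of_le (lt_of_lt_of_le h0 hqs) hsr
    have hqr : q * r = s * t := h a b c
    have hstpos : 0 < s * t := by rw [← hqr]; exact mul_pos h0 hrpos
    have hspos : 0 < s := lt_of_lt_of_le h0 hqs
    have htpos : 0 < t := by
      by_contra hc
      push_neg at hc
      nlinarith
    have : Real.log q + Real.log r - Real.log s - Real.log t = 0 := by
      rw [← Real.log_mul (ne_of_gt h0) (ne_of_gt hrpos), hqr,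
        Real.log_mul (ne_of_gt hspos) (ne_of_gt htpos)]
      ring
    rw [this, mul_zero]
end cmi

section joint
variable {Ω : Type*} [Fintype Ω] {n : ℕ} {α : Fin n → Type*}
    [∀ i, Fintype (α i)] [∀ i, DecidableEq (α i)]
    {γ : Type*} [Fintype γ] [DecidableEq γ]
    {p : Ω → ℝ} {Y : ∀ i, Ω → α i} {W : Ω → γ}

lemma dist_empty_joint (z : ∀ j : (∅ : Finset (Fin n)), α j.1) (w : γ) :
    distOf p (fun ω => (fun j : (∅ : Finset (Fin n)) => Y j.1 ω, W ω)) (z, w)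
      = distOf p W w := by
  unfold distOf
  refine Finset.sum_congr rfl fun ω _ => ?_
  have hz : (fun j : (∅ : Finset (Fin n)) => Y j.1 ω) = z := by
    funext j
    exact absurd j.2 (Finset.notMem_empty j.1)
  simp [Prod.ext_iff, hz]

lemma marg_step (k0 : Fin n) (A : Finset (Fin n)) (hk0 : k0 ∉ A) (y : ∀ j, α j) (w : γ) :
    ∑ b : α k0, distOf p
        (fun ω => (fun j : (insert k0 A : Finset (Fin n)) => Y j.1 ω, W ω))
        ((fun j => Function.update y k0 b j.1), w)
      = distOf p (fun ω => (fun j : A => Y j.1 ω, W ω)) ((fun j => y j.1), w) := by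
  unfold distOf
  rw [Finset.sum_comm]
  refine Finset.sum_congr rfl fun ω _ => ?_
  have hiff : ∀ b : α k0,
      ((fun j : (insert k0 A : Finset (Fin n)) => Y j.1 ω)
          = fun j : (insert k0 A : Finset (Fin n)) => Function.update y k0 b j.1)
        ↔ (b = Y k0 ω ∧ ((fun j : A => Y j.1 ω) = fun j : A => y j.1)) := by
    intro b
    constructor
    · intro h
      constructor
      · have := congrFun h ⟨k0, Finset.mem_insert_self k0 A⟩
        simp only [Function.update_self] at this
        exact this.symm
      · funext j
        obtain ⟨jv, hm⟩ := j
        have hne : jv ≠ k0 := fun hh => hk0 (hh ▸ hm)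
        have := congrFun h ⟨jv, Finset.mem_insert_of_mem hm⟩
        simpa [Function.update_of_ne hne] using this
    · rintro ⟨h1, h2⟩
      funext j
      obtain ⟨jv, hm⟩ := j
      rcases Finset.mem_insert.mp hm with hj | hj
      · subst hj
        simp [Function.update_self, h1.symm]
      · have hne : jv ≠ k0 := fun hh => hk0 (hh ▸ hj)
        have := congrFun h2 ⟨jv, hj⟩
        simpa [Function.update_of_ne hne] using this
  by_cases hD : ((fun j : A => Y j.1 ω) = fun j : A => y j.1) ∧ W ω = w
  · rw [if_pos (by exact Prod.ext hD.1 hD.2)]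
    have : ∀ b : α k0,
        (if ((fun j : (insert k0 A : Finset (Fin n)) => Y j.1 ω, W ω)
            = ((fun j : (insert k0 A : Finset (Fin n)) => Function.update y k0 b j.1), w))
          then p ω else 0)
          = (if b = Y k0 ω then p ω else 0) := by
      intro b
      congr 1
      rw [Prod.ext_iff]
      simp only [hiff b, hD.1, hD.2, and_true, eq_self_iff_true]
    rw [Finset.sum_congr rfl fun b _ => this b]
    simp
  · rw [if_neg (fun hc => hD ⟨(Prod.ext_iff.mp hc).1, (Prod.ext_iff.mp hc).2⟩)]
    refine Finset.sum_eq_zero fun b _ => if_neg fun hc => ?_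
    have h1 := (Prod.ext_iff.mp hc).1
    have h2 := (Prod.ext_iff.mp hc).2
    exact hD ⟨((hiff b).mp h1).2, h2⟩
end joint

section prodid
variable {Ω : Type*} [Fintype Ω] {n : ℕ} {α : Fin n → Type*}
    [∀ i, Fintype (α i)] [∀ i, DecidableEq (α i)]
    {γ : Type*} [Fintype γ] [DecidableEq γ]
    {p : Ω → ℝ} {Y : ∀ i, Ω → α i} {W : Ω → γ}

lemma prodIdentity
    (hCI : ∀ (y : ∀ i, α i) (w : γ),
      distOf p (fun ω => ((fun i => Y i ω), W ω)) (y, w) * (distOf p W w) ^ (n - 1)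
        = ∏ i, distOf p (fun ω => (Y i ω, W ω)) (y i, w))
    (hn : 0 < n) (A : Finset (Fin n)) (y : ∀ j, α j) (w : γ) :
    distOf p (fun ω => (fun j : A => Y j.1 ω, W ω)) ((fun j : A => y j.1), w)
        * distOf p W w ^ A.card
      = distOf p W w * ∏ j ∈ A, distOf p (fun ω => (Y j ω, W ω)) (y j, w) := by
  have main : ∀ m (A : Finset (Fin n)), Aᶜ.card = m → ∀ (y : ∀ j, α j) (w : γ),
      distOf p (fun ω => (fun j : A => Y j.1 ω, W ω)) ((fun j : A => y j.1), w)
          * distOf p W w ^ A.card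
        = distOf p W w * ∏ j ∈ A, distOf p (fun ω => (Y j ω, W ω)) (y j, w) := by
    intro m
    induction m with
    | zero =>
      intro A hA y w
      have hAuniv : A = Finset.univ := by
        have := Finset.card_eq_zero.mp hA
        rwa [Finset.compl_eq_empty_iff] at this
      subst hAuniv
      have hcard : (Finset.univ : Finset (Fin n)).card = n := by
        rw [Finset.card_univ, Fintype.card_fin]
      have hrec : distOf p (fun ω => (fun j : (Finset.univ : Finset (Fin n)) => Y j.1 ω, W ω))
            ((fun j : (Finset.univ : Finset (Fin n)) => y j.1), w)
          = distOf p (fun ω => ((fun i => Y i ω), W ω)) (y, w) := by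
        have hg : Function.Injective (fun x : (∀ i, α i) × γ =>
            ((fun j : (Finset.univ : Finset (Fin n)) => x.1 j.1), x.2)) := by
          rintro ⟨f, u⟩ ⟨f', u'⟩ h
          simp only [Prod.mk.injEq] at h
          refine Prod.ext ?_ h.2
          funext i
          exact congrFun h.1 ⟨i, Finset.mem_univ i⟩
        exact distOf_comp_inj (fun ω => ((fun i => Y i ω), W ω)) _ hg (y, w)
      rw [hcard, hrec]
      have hpow : distOf p W w ^ n = distOf p W w ^ (n - 1) * distOf p W w := by
        conv_lhs => rw [← Nat.sub_add_cancel hn]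
        rw [pow_succ]
      rw [hpow, ← mul_assoc, hCI y w]
      rw [show (Finset.univ : Finset (Fin n)).prod (fun j => distOf p
        (fun ω => (Y j ω, W ω)) (y j, w)) = ∏ i, distOf p (fun ω => (Y i ω, W ω)) (y i, w)
        from rfl]
      ring
    | succ k ih =>
      intro A hA y w
      have hne : Aᶜ.Nonempty := Finset.card_pos.mp (by omega)
      obtain ⟨k0, hk0c⟩ := hne
      have hk0 : k0 ∉ A := Finset.mem_compl.mp hk0c
      have hA' : (insert k0 A)ᶜ.card = k := by
        rw [Finset.compl_insert, Finset.card_erase_of_mem hk0c, hA]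
        omega
      have hsum' : ∀ b : α k0, distOf p
            (fun ω => (fun j : (insert k0 A : Finset (Fin n)) => Y j.1 ω, W ω))
            ((fun j : (insert k0 A : Finset (Fin n)) => Function.update y k0 b j.1), w)
            * distOf p W w ^ (insert k0 A).card
          = distOf p W w * ∏ j ∈ insert k0 A,
              distOf p (fun ω => (Y j ω, W ω)) (Function.update y k0 b j, w) :=
        fun b => ih (insert k0 A) hA' (Function.update y k0 b) w
      have hRHS : ∀ b : α k0, distOf p W w * ∏ j ∈ insert k0 A,
            distOf p (fun ω => (Y j ω, W ω)) (Function.update y k0 b j, w)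
          = distOf p W w * (distOf p (fun ω => (Y k0 ω, W ω)) (b, w)
              * ∏ j ∈ A, distOf p (fun ω => (Y j ω, W ω)) (y j, w)) := by
        intro b
        rw [Finset.prod_insert hk0, Function.update_self]
        congr 2
        refine Finset.prod_congr rfl fun j hj => ?_
        rw [Function.update_of_ne (fun hh => hk0 (by rw [← hh]; exact hj))]
      have hkey : distOf p (fun ω => (fun j : A => Y j.1 ω, W ω)) ((fun j : A => y j.1), w)
            * distOf p W w ^ ((insert k0 A).card)
          = distOf p W w * distOf p W w
              * ∏ j ∈ A, distOf p (fun ω => (Y j ω, W ω)) (y j, w) := by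
        calc distOf p (fun ω => (fun j : A => Y j.1 ω, W ω)) ((fun j : A => y j.1), w)
              * distOf p W w ^ ((insert k0 A).card)
            = (∑ b : α k0, distOf p
                (fun ω => (fun j : (insert k0 A : Finset (Fin n)) => Y j.1 ω, W ω))
                ((fun j : (insert k0 A : Finset (Fin n)) => Function.update y k0 b j.1), w))
              * distOf p W w ^ ((insert k0 A).card) := by
              rw [marg_step k0 A hk0 y w]
          _ = ∑ b : α k0, distOf p
                (fun ω => (fun j : (insert k0 A : Finset (Fin n)) => Y j.1 ω, W ω))
                ((fun j : (insert k0 A : Finset (Fin n)) => Function.update y k0 b j.1), w)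
              * distOf p W w ^ ((insert k0 A).card) := by rw [Finset.sum_mul]
          _ = ∑ b : α k0, distOf p W w * (distOf p (fun ω => (Y k0 ω, W ω)) (b, w)
                * ∏ j ∈ A, distOf p (fun ω => (Y j ω, W ω)) (y j, w)) := by
              refine Finset.sum_congr rfl fun b _ => ?_
              rw [hsum' b, hRHS b]
          _ = distOf p W w * (∑ b : α k0, distOf p (fun ω => (Y k0 ω, W ω)) (b, w))
                * ∏ j ∈ A, distOf p (fun ω => (Y j ω, W ω)) (y j, w) := by
              rw [Finset.mul_sum, Finset.sum_mul]
              exact Finset.sum_congr rfl fun b _ => by ring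
          _ = distOf p W w * distOf p W w
                * ∏ j ∈ A, distOf p (fun ω => (Y j ω, W ω)) (y j, w) := by
              rw [distOf_fst_marg (Y k0) W w]
      rcases eq_or_ne (distOf p W w) 0 with hr0 | hr0
      · rw [hr0]
        rcases Finset.eq_empty_or_nonempty A with hAe | hAne
        · subst hAe
          rw [dist_empty_joint, hr0]
          simp
        · rw [zero_pow (Nat.pos_iff_ne_zero.mp (Finset.card_pos.mpr hAne))]
          ring
      · have hcard' : (insert k0 A).card = A.card + 1 := Finset.card_insert_of_notMem hk0
        rw [hcard', pow_succ, ← mul_assoc] at hkey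
        have hkey2 : distOf p (fun ω => (fun j : A => Y j.1 ω, W ω)) ((fun j : A => y j.1), w)
              * distOf p W w ^ A.card * distOf p W w
            = (distOf p W w * ∏ j ∈ A, distOf p (fun ω => (Y j ω, W ω)) (y j, w))
              * distOf p W w := by
          rw [hkey]; ring
        exact mul_right_cancel₀ hr0 hkey2
  exact main Aᶜ.card A rfl y w
end prodid

section final
variable {Ω : Type*} [Fintype Ω] {n : ℕ} {α : Fin n → Type*}
    [∀ i, Fintype (α i)] [∀ i, DecidableEq (α i)]
    {γ : Type*} [Fintype γ] [DecidableEq γ]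
    {p : Ω → ℝ} {Y : ∀ i, Ω → α i} {W : Ω → γ}

set_option maxHeartbeats 8000000 in
lemma condIndep_joint (hp : ∀ ω, 0 ≤ p ω)
    (hCI : ∀ (y : ∀ i, α i) (w : γ),
      distOf p (fun ω => ((fun i => Y i ω), W ω)) (y, w) * (distOf p W w) ^ (n - 1)
        = ∏ i, distOf p (fun ω => (Y i ω, W ω)) (y i, w))
    (hn : 0 < n) (A : Finset (Fin n)) (i : Fin n) (hiA : i ∉ A) :
    CondIndepFun p (Y i) (fun ω => fun j : A => Y j.1 ω) W := by
  intro b y c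
  dsimp only
  rcases isEmpty_or_nonempty Ω with hΩ | hΩ
  · simp [distOf]
  · obtain ⟨ω₀⟩ := hΩ
    set yfull : ∀ j, α j :=
      Function.update (fun j => if h2 : j ∈ A then y ⟨j, h2⟩ else Y j ω₀) i b with hyf
    have F2 : yfull i = b := Function.update_self _ _ _
    have F1 : (fun j : A => yfull j.1) = y := by
      funext j
      obtain ⟨jv, hm⟩ := j
      have hne : jv ≠ i := fun hh => hiA (hh ▸ hm)
      simp [hyf, Function.update_of_ne hne, hm]
    have hR : distOf p (fun ω => (Y i ω, (fun j : A => Y j.1 ω), W ω)) (b, y, c)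
        = distOf p (fun ω => (fun j : (insert i A : Finset (Fin n)) => Y j.1 ω, W ω))
            ((fun j : (insert i A : Finset (Fin n)) => yfull j.1), c) := by
      unfold distOf
      refine Finset.sum_congr rfl fun ω _ => ?_
      refine if_congr ?_ rfl rfl
      dsimp only
      simp only [Prod.mk.injEq]
      constructor
      · rintro ⟨h1, h2, h3⟩
        refine ⟨?_, h3⟩
        funext j
        obtain ⟨jv, hm⟩ := j
        rcases Finset.mem_insert.mp hm with hj | hj
        · subst hj
          rw [F2]
          exact h1
        · have := congrFun h2 ⟨jv, hj⟩
          dsimp only at this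
          rw [this]
          exact (congrFun F1 ⟨jv, hj⟩).symm
      · rintro ⟨h1, h3⟩
        refine ⟨?_, ?_, h3⟩
        · have := congrFun h1 ⟨i, Finset.mem_insert_self i A⟩
          dsimp only at this
          rw [this, F2]
        · funext j
          obtain ⟨jv, hm⟩ := j
          have := congrFun h1 ⟨jv, Finset.mem_insert_of_mem hm⟩
          dsimp only at this
          rw [this]
          exact congrFun F1 ⟨jv, hm⟩
    have PA := prodIdentity hCI hn A yfull c
    have PA' := prodIdentity hCI hn (insert i A) yfull c
    rw [Finset.prod_insert hiA, F2] at PA'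
    rw [Finset.card_insert_of_notMem hiA, pow_succ, ← mul_assoc] at PA'
    rw [F1] at PA
    rw [hR]
    set D := distOf p (fun ω => (fun j : (insert i A : Finset (Fin n)) => Y j.1 ω, W ω))
        ((fun j : (insert i A : Finset (Fin n)) => yfull j.1), c) with hD
    set E := distOf p (fun ω => (fun j : A => Y j.1 ω, W ω)) (y, c) with hE
    set di := distOf p (fun ω => (Y i ω, W ω)) (b, c) with hdi
    set r := distOf p W c with hr
    rcases eq_or_ne r 0 with hr0 | hr0
    · have hdile : di ≤ r := distOf_pair_le hp (Y i) W b c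
      have hdin : 0 ≤ di := distOf_nonneg hp _ _
      have : di = 0 := le_antisymm (hr0 ▸ hdile) hdin
      rw [hr0, this, mul_zero, zero_mul]
    · have hcancel : (D * r) * r ^ A.card = (di * E) * r ^ A.card := by
        calc (D * r) * r ^ A.card = D * r ^ A.card * r := by ring
          _ = r * (di * ∏ j ∈ A, distOf p (fun ω => (Y j ω, W ω)) (yfull j, c)) := PA'
          _ = di * (E * r ^ A.card) := by rw [PA]; ring
          _ = (di * E) * r ^ A.card := by ring
      exact mul_right_cancel₀ (pow_ne_zero _ hr0) hcancel

set_option maxHeartbeats 8000000 in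
lemma entropy_joint_pairW (A : Finset (Fin n)) (i : Fin n) :
    entropy p (fun ω => (Y i ω, (fun j : A => Y j.1 ω), W ω))
      = entropy p (fun ω => (fun j : (insert i A : Finset (Fin n)) => Y j.1 ω, W ω)) := by
  have hg : Function.Injective
      (fun x : (∀ j : (insert i A : Finset (Fin n)), α j.1) × γ =>
        (x.1 ⟨i, Finset.mem_insert_self i A⟩,
          (fun j : A => x.1 ⟨j.1, Finset.mem_insert_of_mem j.2⟩), x.2)) := by
    rintro ⟨x, u⟩ ⟨x', u'⟩ h
    simp only [Prod.mk.injEq] at h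
    refine Prod.ext ?_ h.2.2
    funext j
    obtain ⟨jv, hm⟩ := j
    rcases Finset.mem_insert.mp hm with hj | hj
    · subst hj
      exact h.1
    · exact congrFun h.2.1 ⟨jv, hj⟩
  exact entropy_comp_inj' (fun ω => (fun j : (insert i A : Finset (Fin n)) => Y j.1 ω, W ω)) _ _ hg (fun ω => rfl)

set_option maxHeartbeats 8000000 in
lemma entropy_split (S T : Finset (Fin n)) (hST : S ⊆ T) :
    entropy p (fun ω => ((fun j : (T \ S : Finset (Fin n)) => Y j.1 ω),
        (fun j : S => Y j.1 ω)))
      = entropy p (fun ω => fun j : T => Y j.1 ω) := by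
  have hg : Function.Injective (fun x : (∀ j : T, α j.1) =>
      ((fun j : (T \ S : Finset (Fin n)) => x ⟨j.1, Finset.sdiff_subset j.2⟩),
        (fun j : S => x ⟨j.1, hST j.2⟩))) := by
    intro x x' h
    simp only [Prod.mk.injEq] at h
    funext j
    obtain ⟨jv, hm⟩ := j
    by_cases hs : jv ∈ S
    · exact congrFun h.2 ⟨jv, hs⟩
    · exact congrFun h.1 ⟨jv, Finset.mem_sdiff.mpr ⟨hm, hs⟩⟩
  exact entropy_comp_inj' (fun ω => fun j : T => Y j.1 ω) _ _ hg (fun ω => rfl)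

set_option maxHeartbeats 8000000 in
lemma entropy_split3 (S T : Finset (Fin n)) (i : Fin n) (hST : S ⊆ T) :
    entropy p (fun ω => (Y i ω, (fun j : (T \ S : Finset (Fin n)) => Y j.1 ω),
        (fun j : S => Y j.1 ω)))
      = entropy p (fun ω => fun j : (insert i T : Finset (Fin n)) => Y j.1 ω) := by
  have hg : Function.Injective (fun x : (∀ j : (insert i T : Finset (Fin n)), α j.1) =>
      (x ⟨i, Finset.mem_insert_self i T⟩,
        (fun j : (T \ S : Finset (Fin n)) =>
          x ⟨j.1, Finset.mem_insert_of_mem (Finset.sdiff_subset j.2)⟩),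
        (fun j : S => x ⟨j.1, Finset.mem_insert_of_mem (hST j.2)⟩))) := by
    intro x x' h
    simp only [Prod.mk.injEq] at h
    funext j
    obtain ⟨jv, hm⟩ := j
    rcases Finset.mem_insert.mp hm with hj | hj
    · subst hj
      exact h.1
    · by_cases hs : jv ∈ S
      · exact congrFun h.2.2 ⟨jv, hs⟩
      · exact congrFun h.2.1 ⟨jv, Finset.mem_sdiff.mpr ⟨hj, hs⟩⟩
  exact entropy_comp_inj' (fun ω => fun j : (insert i T : Finset (Fin n)) => Y j.1 ω) _ _ hg (fun ω => rfl)

set_option maxHeartbeats 8000000 in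
lemma entropy_insert_pair (S : Finset (Fin n)) (i : Fin n) :
    entropy p (fun ω => (Y i ω, (fun j : S => Y j.1 ω)))
      = entropy p (fun ω => fun j : (insert i S : Finset (Fin n)) => Y j.1 ω) := by
  have hg : Function.Injective (fun x : (∀ j : (insert i S : Finset (Fin n)), α j.1) =>
      (x ⟨i, Finset.mem_insert_self i S⟩,
        (fun j : S => x ⟨j.1, Finset.mem_insert_of_mem j.2⟩))) := by
    intro x x' h
    simp only [Prod.mk.injEq] at h
    funext j
    obtain ⟨jv, hm⟩ := j
    rcases Finset.mem_insert.mp hm with hj | hj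
    · subst hj
      exact h.1
    · exact congrFun h.2 ⟨jv, hj⟩
  exact entropy_comp_inj' (fun ω => fun j : (insert i S : Finset (Fin n)) => Y j.1 ω) _ _ hg (fun ω => rfl)

end final


set_option maxHeartbeats 8000000 in
/-- If `Y 0, …, Y (n-1)` are mutually conditionally independent given `W`, then the
set function `f S := I(Y_S; W)` (where `Y_S` is the joint random variable
`(Y i)_{i ∈ S}`) is submodular: for `S ⊆ T` and `i ∉ T`,
`f (S ∪ {i}) - f S ≥ f (T ∪ {i}) - f T`. -/
theorem mutualInfo_joint_submodular_of_condIndep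
    {Ω : Type*} [Fintype Ω] {n : ℕ} {α : Fin n → Type*}
    [∀ i, Fintype (α i)] [∀ i, DecidableEq (α i)]
    {γ : Type*} [Fintype γ] [DecidableEq γ]
    (p : Ω → ℝ) (hp : ∀ ω, 0 ≤ p ω) (hsum : ∑ ω, p ω = 1)
    (Y : ∀ i, Ω → α i) (W : Ω → γ)
    (hCI : ∀ (y : ∀ i, α i) (w : γ),
      distOf p (fun ω => ((fun i => Y i ω), W ω)) (y, w) * (distOf p W w) ^ (n - 1)
        = ∏ i, distOf p (fun ω => (Y i ω, W ω)) (y i, w))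
    (S T : Finset (Fin n)) (i : Fin n) (hST : S ⊆ T) (hi : i ∉ T) :
    mutualInfo p (fun ω => fun j : (insert i T : Finset (Fin n)) => Y j.1 ω) W
        - mutualInfo p (fun ω => fun j : T => Y j.1 ω) W
      ≤ mutualInfo p (fun ω => fun j : (insert i S : Finset (Fin n)) => Y j.1 ω) W
        - mutualInfo p (fun ω => fun j : S => Y j.1 ω) W := by
  have hn : 0 < n := i.pos
  have hiS : i ∉ S := fun h => hi (hST h)
  have hMS := condMutualInfo_eq_zero hp (Y i) (fun ω => fun j : S => Y j.1 ω) W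
    (condIndep_joint hp hCI hn S i hiS)
  have hMT := condMutualInfo_eq_zero hp (Y i) (fun ω => fun j : T => Y j.1 ω) W
    (condIndep_joint hp hCI hn T i hi)
  simp only [condMutualInfo] at hMS hMT
  rw [entropy_joint_pairW S i] at hMS
  rw [entropy_joint_pairW T i] at hMT
  have hcmi := condMutualInfo_nonneg hp hsum (Y i)
    (fun ω => fun j : (T \ S : Finset (Fin n)) => Y j.1 ω)
    (fun ω => fun j : S => Y j.1 ω)
  simp only [condMutualInfo] at hcmi
  rw [entropy_insert_pair S i, entropy_split S T hST, entropy_split3 S T i hST] at hcmi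
  simp only [mutualInfo]
  linarith
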